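/- arXiv:1708.02673 — 3 statements merged into one kernel-verified Lean document; each statement's English description precedes it below -/
import Mathlib

section
/- Let r(z₁,z₂,z₃) = Re(z₁) + |z₂|²·Re(z₂² − z₃³) + |z₃|²·Re(z₃²) − Re(z₂²·conj(z₃)) on ℂ³. Then for the holomorphic curve γ(t) = (0, t³, t²), the composition r∘γ is identically zero; i.e., the image of γ lies in the hypersurface {r = 0}. -/
/-!
Writing |z|² = z z̄ turns r into the real part of a polynomial in the coordinates and their
conjugates. On γ it is Re(t³t̄³ (t⁶ - t⁶) + t²t̄² t⁴ - t⁶ t̄²), which vanishes identically.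
-/

open Complex

/-- The defining function r(z₁,z₂,z₃) = Re z₁ + |z₂|²Re(z₂²-z₃³) + |z₃|²Re(z₃²) - Re(z₂² z̄₃). -/
noncomputable def rDef (z₁ z₂ z₃ : ℂ) : ℝ :=
  z₁.re + ‖z₂‖ ^ 2 * (z₂ ^ 2 - z₃ ^ 3).re + ‖z₃‖ ^ 2 * (z₃ ^ 2).re
    - (z₂ ^ 2 * (starRingEnd ℂ) z₃).re

open ComplexConjugate

lemma Complex.norm_sq_mul_re (z w : ℂ) : ‖z‖ ^ 2 * w.re = (z * conj z * w).re := by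
  rw [mul_conj', ← ofReal_pow, re_ofReal_mul]

lemma rDef_eq_re (z₁ z₂ z₃ : ℂ) :
    rDef z₁ z₂ z₃ =
      (z₁ + z₂ * conj z₂ * (z₂ ^ 2 - z₃ ^ 3) + z₃ * conj z₃ * z₃ ^ 2 - z₂ ^ 2 * conj z₃).re := by
  rw [rDef, norm_sq_mul_re, norm_sq_mul_re, sub_re, add_re, add_re]

/-- The curve γ(t) = (0, t³, t²) lies in the hypersurface {r = 0}. -/
theorem stmt0 : ∀ t : ℂ, rDef 0 (t ^ 3) (t ^ 2) = 0 := by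
  intro t
  rw [rDef_eq_re]
  convert zero_re using 2
  ring
end

section
/- Let r(z₁,z₂,z₃) = Re(z₁) + |z₂|²·Re(z₂² − z₃³) + |z₃|²·Re(z₃²) − Re(z₂²·conj(z₃)). Suppose γ(t) = (0, γ²(t), γ³(t)) is a holomorphic curve with γ²(0) = γ³(0) = 0 and (γ²)'(0) ≠ 0 and (γ³)'(0) ≠ 0. Then the coefficient of t²·conj(t) in the Taylor expansion of r∘γ at 0 is nonzero; in particular r∘γ vanishes to order exactly 3 at 0. -/
open Complex Filter Topology

/-- Wirtinger derivative ∂/∂t of a function of one complex variable. -/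
noncomputable def wd (f : ℂ → ℂ) : ℂ → ℂ := fun t =>
  (fderiv ℝ f t 1 - Complex.I * fderiv ℝ f t Complex.I) / 2

/-- Wirtinger derivative ∂/∂t̄ of a function of one complex variable. -/
noncomputable def wdbar (f : ℂ → ℂ) : ℂ → ℂ := fun t =>
  (fderiv ℝ f t 1 + Complex.I * fderiv ℝ f t Complex.I) / 2

/-- D^{a,b}[f] = (∂/∂t)^a (∂/∂t̄)^b f. -/
noncomputable def Dab (a b : ℕ) (f : ℂ → ℂ) : ℂ → ℂ := wd^[a] (wdbar^[b] f)

/-! Writing `u = γ₂`, `v = γ₃`, one has `r(0, u, v) = Re (P ū + Q v̄)` with `P = u³ - u v³` and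
`Q = v³ - u²`, so `r ∘ γ` is a sum of products `f ḡ` of holomorphic functions, and for these
`∂ᵃ ∂̄ᵇ (f ḡ)(0) = f⁽ᵃ⁾(0) · conj (g⁽ᵇ⁾(0))`. Since `u` and `v` vanish to order exactly one, `P`
vanishes to order at least three and `Q` to order exactly two. Hence every term of total degree
below three vanishes, and the only surviving `t² t̄` term is `Q''(0) · conj (v'(0)) / 2 ≠ 0`. -/

open scoped ComplexConjugate

theorem AnalyticAt.iteratedDeriv {𝕜 E : Type*} [NontriviallyNormedField 𝕜] [NormedAddCommGroup E]
    [NormedSpace 𝕜 E] [CompleteSpace E] {f : 𝕜 → E} {x : 𝕜} (hf : AnalyticAt 𝕜 f x) (n : ℕ) :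
    AnalyticAt 𝕜 (iteratedDeriv n f) x := by
  rw [iteratedDeriv_eq_iterate]
  exact hf.iterated_deriv n

section Wirtinger

variable {F G : ℂ → ℂ} {x : ℂ}

theorem fderiv_conj (F : ℂ → ℂ) (x : ℂ) :
    fderiv ℝ (fun t => conj (F t)) x = conjCLE.toContinuousLinearMap.comp (fderiv ℝ F x) :=
  conjCLE.comp_fderiv

theorem wd_eq_conj_wdbar_conj (F : ℂ → ℂ) :
    wd F = fun t => conj (wdbar (fun s => conj (F s)) t) := by
  funext t
  simp [wd, wdbar, fderiv_conj, map_ofNat]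
  ring

theorem wd_iterate_eq_conj_wdbar_iterate_conj (a : ℕ) (F : ℂ → ℂ) :
    wd^[a] F = fun t => conj (wdbar^[a] (fun s => conj (F s)) t) := by
  induction a with
  | zero => simp
  | succ a ih =>
    rw [Function.iterate_succ_apply', ih, wd_eq_conj_wdbar_conj, Function.iterate_succ_apply']
    simp only [conj_conj]

theorem wdbar_congr (h : F =ᶠ[𝓝 x] G) : wdbar F =ᶠ[𝓝 x] wdbar G :=
  (h.fderiv (𝕜 := ℝ)).mono fun t ht => by simp [wdbar, ht]

theorem wdbar_iterate_congr (h : F =ᶠ[𝓝 x] G) (n : ℕ) : wdbar^[n] F =ᶠ[𝓝 x] wdbar^[n] G := by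
  induction n with
  | zero => exact h
  | succ n ih =>
    rw [Function.iterate_succ_apply', Function.iterate_succ_apply']
    exact wdbar_congr ih

theorem wdbar_finset_sum {ι : Type*} {s : Finset ι} {F : ι → ℂ → ℂ}
    (h : ∀ i ∈ s, DifferentiableAt ℝ (F i) x) :
    wdbar (fun t => ∑ i ∈ s, F i t) x = ∑ i ∈ s, wdbar (F i) x := by
  simp only [wdbar, fderiv_fun_sum h, sum_apply]
  rw [Finset.mul_sum, ← Finset.sum_add_distrib, Finset.sum_div]

theorem DifferentiableAt.fderiv_real_apply (hF : DifferentiableAt ℂ F x) (v : ℂ) :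
    fderiv ℝ F x v = v * deriv F x := by
  rw [hF.fderiv_restrictScalars ℝ, ContinuousLinearMap.coe_restrictScalars',
    fderiv_eq_smul_deriv, smul_eq_mul]

theorem DifferentiableAt.real_conj (hF : DifferentiableAt ℂ F x) :
    DifferentiableAt ℝ (fun t => conj (F t)) x :=
  conjCLE.differentiableAt.comp x (hF.restrictScalars ℝ)

theorem wdbar_mul_conj (hF : DifferentiableAt ℂ F x) (hG : DifferentiableAt ℂ G x) :
    wdbar (fun t => F t * conj (G t)) x = F x * conj (deriv G x) := by
  rw [wdbar, fderiv_fun_mul (hF.restrictScalars ℝ) hG.real_conj, fderiv_conj]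
  simp only [add_apply, smul_apply, smul_eq_mul,
    ContinuousLinearMap.comp_apply, ContinuousLinearEquiv.coe_coe, conjCLE_apply,
    hF.fderiv_real_apply, hG.fderiv_real_apply, map_mul, map_one, conj_I]
  linear_combination (conj (G x) * deriv F x - F x * conj (deriv G x)) / 2 * I_sq

theorem wdbar_iterate_sum_mul_conj {ι : Type*} {s : Finset ι} {f g : ι → ℂ → ℂ}
    (hf : ∀ i ∈ s, AnalyticAt ℂ (f i) x) (hg : ∀ i ∈ s, AnalyticAt ℂ (g i) x) (n : ℕ) :
    wdbar^[n] (fun t => ∑ i ∈ s, f i t * conj (g i t)) =ᶠ[𝓝 x]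
      fun t => ∑ i ∈ s, f i t * conj (iteratedDeriv n (g i) t) := by
  induction n with
  | zero => simp
  | succ n ih =>
    rw [Function.iterate_succ_apply']
    refine (wdbar_congr ih).trans ?_
    have hnear : ∀ᶠ t in 𝓝 x, ∀ i ∈ s,
        DifferentiableAt ℂ (f i) t ∧ DifferentiableAt ℂ (iteratedDeriv n (g i)) t := by
      refine (eventually_all_finset s).2 fun i hi => ?_
      filter_upwards [(hf i hi).eventually_analyticAt,
        ((hg i hi).iteratedDeriv n).eventually_analyticAt] with t hft hgt
      exact ⟨hft.differentiableAt, hgt.differentiableAt⟩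
    filter_upwards [hnear] with t ht
    rw [wdbar_finset_sum (F := fun i t => f i t * conj (iteratedDeriv n (g i) t))
      fun i hi => ((ht i hi).1.restrictScalars ℝ).mul (ht i hi).2.real_conj]
    simp only [iteratedDeriv_succ]
    exact Finset.sum_congr rfl fun i hi => wdbar_mul_conj (ht i hi).1 (ht i hi).2

theorem Dab_sum_mul_conj {ι : Type*} {s : Finset ι} {f g : ι → ℂ → ℂ}
    (hf : ∀ i ∈ s, AnalyticAt ℂ (f i) x) (hg : ∀ i ∈ s, AnalyticAt ℂ (g i) x) (a b : ℕ) :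
    Dab a b (fun t => ∑ i ∈ s, f i t * conj (g i t)) x =
      ∑ i ∈ s, iteratedDeriv a (f i) x * conj (iteratedDeriv b (g i) x) := by
  have hconj : (fun t => conj (wdbar^[b] (fun t => ∑ i ∈ s, f i t * conj (g i t)) t)) =ᶠ[𝓝 x]
      fun t => ∑ i ∈ s, iteratedDeriv b (g i) t * conj (f i t) :=
    (wdbar_iterate_sum_mul_conj hf hg b).mono fun t ht => by simp [ht, mul_comm]
  have hgb : ∀ i ∈ s, AnalyticAt ℂ (iteratedDeriv b (g i)) x :=
    fun i hi => (hg i hi).iteratedDeriv b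
  rw [Dab, wd_iterate_eq_conj_wdbar_iterate_conj]
  dsimp only
  rw [((wdbar_iterate_congr hconj a).trans (wdbar_iterate_sum_mul_conj hgb hf a)).eq_of_nhds]
  simp [mul_comm]

theorem Dab_re_sum_mul_conj {ι : Type*} {s : Finset ι} {f g : ι → ℂ → ℂ}
    (hf : ∀ i ∈ s, AnalyticAt ℂ (f i) x) (hg : ∀ i ∈ s, AnalyticAt ℂ (g i) x) (a b : ℕ) :
    Dab a b (fun t => (((∑ i ∈ s, f i t * conj (g i t)).re : ℝ) : ℂ)) x =
      (∑ i ∈ s, (iteratedDeriv a (f i) x * conj (iteratedDeriv b (g i) x) +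
        iteratedDeriv a (g i) x * conj (iteratedDeriv b (f i) x))) / 2 := by
  have hre : (fun t => (((∑ i ∈ s, f i t * conj (g i t)).re : ℝ) : ℂ)) = fun t =>
      ∑ j ∈ s.disjSum s, Sum.elim (fun i t => f i t / 2) (fun i t => g i t / 2) j t *
        conj (Sum.elim g f j t) := by
    funext t
    simp only [Finset.sum_disjSum, Sum.elim_inl, Sum.elim_inr, re_eq_add_conj, map_sum, map_mul,
      conj_conj, Finset.sum_div, ← Finset.sum_add_distrib]
    exact Finset.sum_congr rfl fun i _ => by ring
  rw [hre, Dab_sum_mul_conj]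
  · simp only [Finset.sum_disjSum, Sum.elim_inl, Sum.elim_inr, iteratedDeriv_div_const,
      Finset.sum_div, ← Finset.sum_add_distrib]
    exact Finset.sum_congr rfl fun i _ => by ring
  · simpa using ⟨fun i hi => (hf i hi).div_const, fun i hi => (hg i hi).div_const⟩
  · simpa using ⟨hg, hf⟩

end Wirtinger

theorem iteratedDeriv_eq_zero_of_lt_analyticOrderAt {𝕜 E : Type*} [NontriviallyNormedField 𝕜]
    [CharZero 𝕜] [NormedAddCommGroup E] [NormedSpace 𝕜 E] [CompleteSpace E] {f : 𝕜 → E} {x : 𝕜}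
    (hf : AnalyticAt 𝕜 f x) {n : ℕ} (hn : n < analyticOrderAt f x) : iteratedDeriv n f x = 0 :=
  (natCast_le_analyticOrderAt_iff_iteratedDeriv_eq_zero hf).mp (Order.add_one_le_of_lt hn) n
    (lt_add_one n)

theorem iteratedDeriv_mul_conj_eq_zero {f g : ℂ → ℂ} {x : ℂ} (hf : AnalyticAt ℂ f x)
    (hg : AnalyticAt ℂ g x) {m n a b : ℕ} (hm : m ≤ analyticOrderAt f x)
    (hn : n ≤ analyticOrderAt g x) (h : a < m ∨ b < n) :
    iteratedDeriv a f x * conj (iteratedDeriv b g x) = 0 := by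
  rcases h with ha | hb
  · rw [iteratedDeriv_eq_zero_of_lt_analyticOrderAt hf ((Nat.cast_lt.2 ha).trans_le hm), zero_mul]
  · rw [iteratedDeriv_eq_zero_of_lt_analyticOrderAt hg ((Nat.cast_lt.2 hb).trans_le hn), map_zero,
      mul_zero]

theorem rDef_zero_eq_re (z w : ℂ) :
    rDef 0 z w = ((z ^ 3 - z * w ^ 3) * conj z + (w ^ 3 - z ^ 2) * conj w).re := by
  have hz : (z ^ 3 - z * w ^ 3) * conj z = z * conj z * (z ^ 2 - w ^ 3) := by ring
  have hw : (w ^ 3 - z ^ 2) * conj w = w * conj w * w ^ 2 - z ^ 2 * conj w := by ring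
  rw [hz, hw, mul_conj', mul_conj', ← ofReal_pow, ← ofReal_pow, add_re, sub_re, re_ofReal_mul,
    re_ofReal_mul, rDef, zero_re, zero_add]
  ring

section

variable {u v : ℂ → ℂ} {x : ℂ}

theorem Dab_rDef_zero_comp (hu : AnalyticAt ℂ u x) (hv : AnalyticAt ℂ v x) (a b : ℕ) :
    Dab a b (fun t => ((rDef 0 (u t) (v t) : ℝ) : ℂ)) x =
      (iteratedDeriv a (u ^ 3 - u * v ^ 3) x * conj (iteratedDeriv b u x)
        + iteratedDeriv a u x * conj (iteratedDeriv b (u ^ 3 - u * v ^ 3) x)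
        + (iteratedDeriv a (v ^ 3 - u ^ 2) x * conj (iteratedDeriv b v x)
          + iteratedDeriv a v x * conj (iteratedDeriv b (v ^ 3 - u ^ 2) x))) / 2 := by
  have h : (fun t => ((rDef 0 (u t) (v t) : ℝ) : ℂ)) = fun t =>
      (((∑ i : Fin 2, ![u ^ 3 - u * v ^ 3, v ^ 3 - u ^ 2] i t * conj (![u, v] i t)).re : ℝ) : ℂ) :=
    funext fun t => by simp [rDef_zero_eq_re]
  rw [h, Dab_re_sum_mul_conj, Fin.sum_univ_two]
  · rfl
  · simpa using ⟨(hu.pow 3).sub (hu.mul (hv.pow 3)), (hv.pow 3).sub (hu.pow 2)⟩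
  · simpa using ⟨hu, hv⟩

theorem three_le_analyticOrderAt_pow_three_sub_mul_pow_three (hu : AnalyticAt ℂ u x)
    (hv : AnalyticAt ℂ v x)
    (hu1 : analyticOrderAt u x = 1) (hv1 : analyticOrderAt v x = 1) :
    3 ≤ analyticOrderAt (u ^ 3 - u * v ^ 3) x := by
  refine le_trans ?_ le_analyticOrderAt_sub
  rw [analyticOrderAt_pow hu, analyticOrderAt_mul hu (hv.pow 3), analyticOrderAt_pow hv, hu1, hv1]
  decide

theorem analyticOrderAt_pow_three_sub_sq (hu : AnalyticAt ℂ u x) (hv : AnalyticAt ℂ v x)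
    (hu1 : analyticOrderAt u x = 1) (hv1 : analyticOrderAt v x = 1) :
    analyticOrderAt (v ^ 3 - u ^ 2) x = 2 := by
  have hu2 : analyticOrderAt (-u ^ 2) x = 2 := by
    rw [analyticOrderAt_neg, analyticOrderAt_pow hu, hu1]
    rfl
  have hv3 : analyticOrderAt (v ^ 3) x = 3 := by
    rw [analyticOrderAt_pow hv, hv1]
    rfl
  rw [sub_eq_add_neg, analyticOrderAt_add_eq_right_of_lt (by rw [hu2, hv3]; decide), hu2]

end

/-- If γ = (0,γ²,γ³) is holomorphic with γ²(0)=γ³(0)=0 and (γ²)'(0)≠0, (γ³)'(0)≠0, then the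
coefficient of t²t̄ in the Taylor expansion of r∘γ (i.e. D^{2,1}[r∘γ](0)) is nonzero; in
particular r∘γ vanishes to order exactly 3 at 0. -/
theorem stmt2 (γ₂ γ₃ : ℂ → ℂ) (h₂ : AnalyticAt ℂ γ₂ 0) (h₃ : AnalyticAt ℂ γ₃ 0)
    (h₂0 : γ₂ 0 = 0) (h₃0 : γ₃ 0 = 0) (h₂' : deriv γ₂ 0 ≠ 0) (h₃' : deriv γ₃ 0 ≠ 0) :
    Dab 2 1 (fun t => ((rDef 0 (γ₂ t) (γ₃ t) : ℝ) : ℂ)) 0 ≠ 0 ∧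
    (∀ a b : ℕ, a + b < 3 → Dab a b (fun t => ((rDef 0 (γ₂ t) (γ₃ t) : ℝ) : ℂ)) 0 = 0) := by
  have hu := h₂.analyticOrderAt_eq_one_of_zero_deriv_ne_zero h₂0 h₂'
  have hv := h₃.analyticOrderAt_eq_one_of_zero_deriv_ne_zero h₃0 h₃'
  have hP := three_le_analyticOrderAt_pow_three_sub_mul_pow_three h₂ h₃ hu hv
  have hQ := analyticOrderAt_pow_three_sub_sq h₂ h₃ hu hv
  simp only [Dab_rDef_zero_comp h₂ h₃]
  set P := γ₂ ^ 3 - γ₂ * γ₃ ^ 3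
  set Q := γ₃ ^ 3 - γ₂ ^ 2
  have hPan : AnalyticAt ℂ P 0 := (h₂.pow 3).sub (h₂.mul (h₃.pow 3))
  have hQan : AnalyticAt ℂ Q 0 := (h₃.pow 3).sub (h₂.pow 2)
  have hPu {a b : ℕ} (h : a < 3 ∨ b < 1) : iteratedDeriv a P 0 * conj (iteratedDeriv b γ₂ 0) = 0 :=
    iteratedDeriv_mul_conj_eq_zero hPan h₂ hP hu.ge h
  have huP {a b : ℕ} (h : a < 1 ∨ b < 3) : iteratedDeriv a γ₂ 0 * conj (iteratedDeriv b P 0) = 0 :=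
    iteratedDeriv_mul_conj_eq_zero h₂ hPan hu.ge hP h
  have hQv {a b : ℕ} (h : a < 2 ∨ b < 1) : iteratedDeriv a Q 0 * conj (iteratedDeriv b γ₃ 0) = 0 :=
    iteratedDeriv_mul_conj_eq_zero hQan h₃ hQ.ge hv.ge h
  have hvQ {a b : ℕ} (h : a < 1 ∨ b < 2) : iteratedDeriv a γ₃ 0 * conj (iteratedDeriv b Q 0) = 0 :=
    iteratedDeriv_mul_conj_eq_zero h₃ hQan hv.ge hQ.ge h
  refine ⟨?_, fun a b hab => ?_⟩
  · have hQ'' := ((analyticOrderAt_eq_nat_iff_iteratedDeriv_eq_zero hQan).1 hQ).2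
    rw [hPu (by omega), huP (by omega), hvQ (by omega), iteratedDeriv_one]
    simpa using ⟨hQ'', h₃'⟩
  · rw [hPu (by omega), huP (by omega), hQv (by omega), hvQ (by omega)]
    simp
end

section
/- Let r : ℂⁿ → ℝ be smooth, γ holomorphic, and suppose coordinates are chosen so that all pure holomorphic derivatives of r of orders 2 through N vanish at γ(0) = 0 (i.e., (∂/∂z)^α r(0) = 0 for 2 ≤ |α| ≤ N). Then for 2 ≤ a ≤ N, D^{a,0}[r∘γ](0) = Σ_j r_{z_j}(0)·(d^a γ^j/dt^a)(0). -/
open Complex Filter Topology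

/-- Wirtinger derivative ∂/∂z_j on ℂⁿ. -/
noncomputable def wdz {n : ℕ} (j : Fin n) (f : (Fin n → ℂ) → ℂ) : (Fin n → ℂ) → ℂ := fun z =>
  (fderiv ℝ f z (Pi.single j 1) - Complex.I * fderiv ℝ f z (Pi.single j Complex.I)) / 2

/-- Wirtinger derivative ∂/∂z̄_j on ℂⁿ. -/
noncomputable def wdzbar {n : ℕ} (j : Fin n) (f : (Fin n → ℂ) → ℂ) : (Fin n → ℂ) → ℂ := fun z =>
  (fderiv ℝ f z (Pi.single j 1) + Complex.I * fderiv ℝ f z (Pi.single j Complex.I)) / 2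

namespace Stmt7Aux

open ContDiff

variable {U : Set ℂ}

lemma wd_congr_on (hU : IsOpen U) {f g : ℂ → ℂ} (h : ∀ x ∈ U, f x = g x)
    {t : ℂ} (ht : t ∈ U) : wd f t = wd g t := by
  have hfg : f =ᶠ[nhds t] g := Filter.eventuallyEq_of_mem (hU.mem_nhds ht) h
  simp only [wd, hfg.fderiv_eq]

lemma wd_iter_congr_on (hU : IsOpen U) {f g : ℂ → ℂ} (h : ∀ x ∈ U, f x = g x)
    (a : ℕ) : ∀ t ∈ U, wd^[a] f t = wd^[a] g t := by
  induction a generalizing f g with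
  | zero => intro t ht; simpa using h t ht
  | succ a ih =>
    intro t ht
    rw [Function.iterate_succ_apply, Function.iterate_succ_apply]
    exact ih (fun x hx => wd_congr_on hU h hx) t ht

lemma diffAt (hU : IsOpen U) {f : ℂ → ℂ} (hf : ContDiffOn ℝ ∞ f U) {t : ℂ} (ht : t ∈ U) :
    DifferentiableAt ℝ f t :=
  (hf.differentiableOn (by simp)).differentiableAt (hU.mem_nhds ht)

lemma wd_contDiffOn (hU : IsOpen U) {f : ℂ → ℂ} (hf : ContDiffOn ℝ ∞ f U) :
    ContDiffOn ℝ ∞ (wd f) U := by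
  have h1 : ContDiffOn ℝ ∞ (fderiv ℝ f) U := hf.fderiv_of_isOpen hU (by simp)
  have h2 : ContDiffOn ℝ ∞ (fun t => fderiv ℝ f t 1) U := h1.clm_apply contDiffOn_const
  have h3 : ContDiffOn ℝ ∞ (fun t => fderiv ℝ f t Complex.I) U := h1.clm_apply contDiffOn_const
  exact (h2.sub (contDiffOn_const.mul h3)).div_const _

lemma wd_add {f g : ℂ → ℂ} {t : ℂ} (hf : DifferentiableAt ℝ f t)
    (hg : DifferentiableAt ℝ g t) :
    wd (fun s => f s + g s) t = wd f t + wd g t := by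
  simp only [wd, fderiv_fun_add hf hg, ContinuousLinearMap.add_apply]
  ring

lemma wd_mul {f g : ℂ → ℂ} {t : ℂ} (hf : DifferentiableAt ℝ f t)
    (hg : DifferentiableAt ℝ g t) :
    wd (fun s => f s * g s) t = wd f t * g t + f t * wd g t := by
  simp only [wd, fderiv_fun_mul hf hg, ContinuousLinearMap.add_apply,
    ContinuousLinearMap.smul_apply, smul_eq_mul]
  ring

lemma wd_const_mul {f : ℂ → ℂ} {t : ℂ} (hf : DifferentiableAt ℝ f t) (c : ℂ) :
    wd (fun s => c * f s) t = c * wd f t := by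
  simp only [wd, fderiv_const_mul hf c, ContinuousLinearMap.smul_apply, smul_eq_mul]
  ring

lemma wd_zero_fn : wd (fun _ : ℂ => (0:ℂ)) = fun _ => 0 := by
  funext t
  simp [wd]

lemma wd_iter_zero_fn (a : ℕ) : wd^[a] (fun _ : ℂ => (0:ℂ)) = fun _ => 0 :=
  Function.iterate_fixed wd_zero_fn a

lemma wd_iter_add (hU : IsOpen U) (a : ℕ) {f g : ℂ → ℂ}
    (hf : ContDiffOn ℝ ∞ f U) (hg : ContDiffOn ℝ ∞ g U) :
    ∀ t ∈ U, wd^[a] (fun s => f s + g s) t = wd^[a] f t + wd^[a] g t := by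
  induction a generalizing f g with
  | zero => intro t ht; simp
  | succ a ih =>
    intro t ht
    rw [Function.iterate_succ_apply, Function.iterate_succ_apply,
      Function.iterate_succ_apply]
    have h1 : ∀ x ∈ U, wd (fun s => f s + g s) x = (fun s => wd f s + wd g s) x :=
      fun x hx => wd_add (diffAt hU hf hx) (diffAt hU hg hx)
    rw [wd_iter_congr_on hU h1 a t ht]
    exact ih (wd_contDiffOn hU hf) (wd_contDiffOn hU hg) t ht

lemma wd_iter_const_mul (hU : IsOpen U) (a : ℕ) {f : ℂ → ℂ} (c : ℂ)
    (hf : ContDiffOn ℝ ∞ f U) :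
    ∀ t ∈ U, wd^[a] (fun s => c * f s) t = c * wd^[a] f t := by
  induction a generalizing f with
  | zero => intro t ht; simp
  | succ a ih =>
    intro t ht
    rw [Function.iterate_succ_apply, Function.iterate_succ_apply]
    have h1 : ∀ x ∈ U, wd (fun s => c * f s) x = (fun s => c * wd f s) x :=
      fun x hx => wd_const_mul (diffAt hU hf hx) c
    rw [wd_iter_congr_on hU h1 a t ht]
    exact ih (wd_contDiffOn hU hf) t ht

lemma wd_iter_sum (hU : IsOpen U) (a : ℕ) {ι : Type*} (s : Finset ι) (f : ι → ℂ → ℂ)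
    (hf : ∀ k ∈ s, ContDiffOn ℝ ∞ (f k) U) :
    ∀ t ∈ U, wd^[a] (fun x => ∑ k ∈ s, f k x) t = ∑ k ∈ s, wd^[a] (f k) t := by
  classical
  induction s using Finset.induction with
  | empty =>
    intro t ht
    simp only [Finset.sum_empty, wd_iter_zero_fn]
  | @insert j s hj ih =>
    intro t ht
    simp only [Finset.sum_insert hj]
    have hsum : ContDiffOn ℝ ∞ (fun x => ∑ k ∈ s, f k x) U :=
      ContDiffOn.sum fun k hk => hf k (Finset.mem_insert_of_mem hk)
    rw [wd_iter_add hU a (hf j (Finset.mem_insert_self j s)) hsum t ht,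
      ih (fun k hk => hf k (Finset.mem_insert_of_mem hk)) t ht]

lemma wd_iter_mul_vanish (hU : IsOpen U) (h0U : (0:ℂ) ∈ U) :
    ∀ a : ℕ, ∀ u v : ℂ → ℂ, ContDiffOn ℝ ∞ u U → ContDiffOn ℝ ∞ v U →
      (∀ i ≤ a, wd^[i] u 0 = 0) → wd^[a] (fun t => u t * v t) 0 = 0 := by
  intro a
  induction a with
  | zero =>
    intro u v _ _ h
    have := h 0 le_rfl
    simpa using by simp_all
  | succ a ih =>
    intro u v hu hv h
    rw [Function.iterate_succ_apply]
    have h1 : ∀ x ∈ U, wd (fun t => u t * v t) x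
        = (fun t => wd u t * v t + u t * wd v t) x :=
      fun x hx => wd_mul (diffAt hU hu hx) (diffAt hU hv hx)
    rw [wd_iter_congr_on hU h1 a 0 h0U,
      wd_iter_add hU a ((wd_contDiffOn hU hu).mul hv) (hu.mul (wd_contDiffOn hU hv)) 0 h0U]
    have t1 : wd^[a] (fun t => wd u t * v t) 0 = 0 :=
      ih (wd u) v (wd_contDiffOn hU hu) hv
        (fun i hi => by
          rw [← Function.iterate_succ_apply]
          exact h (i + 1) (by omega))
    have t2 : wd^[a] (fun t => u t * wd v t) 0 = 0 :=
      ih u (wd v) hu (wd_contDiffOn hU hv) (fun i hi => h i (by omega))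
    rw [t1, t2, add_zero]

lemma wd_iter_holo (hU : IsOpen U) :
    ∀ (a : ℕ) (h : ℂ → ℂ), DifferentiableOn ℂ h U →
      ∀ t ∈ U, wd^[a] h t = deriv^[a] h t := by
  intro a
  induction a with
  | zero => intro h _ t _; simp
  | succ a ih =>
    intro h hh t ht
    rw [Function.iterate_succ_apply, Function.iterate_succ_apply]
    have h1 : ∀ x ∈ U, wd h x = deriv h x := by
      intro x hx
      have hx' : DifferentiableAt ℂ h x := hh.differentiableAt (hU.mem_nhds hx)
      have hres : fderiv ℝ h x = (fderiv ℂ h x).restrictScalars ℝ :=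
        hx'.fderiv_restrictScalars ℝ
      have e1 : fderiv ℝ h x 1 = deriv h x := by
        rw [hres]; rfl
      have e2 : fderiv ℝ h x Complex.I = Complex.I * deriv h x := by
        rw [hres]
        have : fderiv ℂ h x Complex.I = Complex.I • fderiv ℂ h x 1 := by
          rw [← map_smul]
          norm_num
        simpa [smul_eq_mul] using this
      simp only [wd, e1, e2]
      have : Complex.I * (Complex.I * deriv h x) = -deriv h x := by
        rw [← mul_assoc, Complex.I_mul_I]; ring
      rw [this]; ring
    rw [wd_iter_congr_on hU h1 a t ht]
    exact ih (deriv h) ((hh.analyticOnNhd hU).deriv_of_isOpen hU).differentiableOn t ht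

variable {n : ℕ}

lemma wdz_contDiff {g : (Fin n → ℂ) → ℂ} (hg : ContDiff ℝ ∞ g) (k : Fin n) :
    ContDiff ℝ ∞ (wdz k g) := by
  have h1 : ContDiff ℝ ∞ (fderiv ℝ g) := hg.fderiv_right (by simp)
  have h2 : ContDiff ℝ ∞ (fun z => fderiv ℝ g z (Pi.single k 1)) :=
    h1.clm_apply contDiff_const
  have h3 : ContDiff ℝ ∞ (fun z => fderiv ℝ g z (Pi.single k Complex.I)) :=
    h1.clm_apply contDiff_const
  exact (h2.sub (contDiff_const.mul h3)).div_const _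

lemma single_lin (L : (Fin n → ℂ) →L[ℝ] ℂ) (k : Fin n) (w : ℂ) :
    (L (Pi.single k w) - Complex.I * L (Pi.single k (Complex.I * w))) / 2
      = (L (Pi.single k 1) - Complex.I * L (Pi.single k Complex.I)) / 2 * w := by
  have h1 : ∀ c : ℂ, Pi.single (M := fun _ : Fin n => ℂ) k c
      = c.re • Pi.single (M := fun _ : Fin n => ℂ) k (1:ℂ)
        + c.im • Pi.single (M := fun _ : Fin n => ℂ) k Complex.I := by
    intro c
    rw [← Pi.single_smul, ← Pi.single_smul, ← Pi.single_add]
    congr 1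
    simp [Complex.real_smul]
  rw [h1 w, h1 (Complex.I * w), map_add, map_add, map_smul, map_smul, map_smul, map_smul]
  simp only [Complex.real_smul, smul_eq_mul, Complex.mul_re, Complex.mul_im, Complex.I_re,
    Complex.I_im]
  push_cast
  set A := L (Pi.single k 1)
  set B := L (Pi.single k Complex.I)
  rw [show w = (w.re : ℂ) + (w.im : ℂ) * Complex.I from (Complex.re_add_im w).symm]
  simp only [Complex.add_re, Complex.add_im, Complex.mul_re, Complex.mul_im,
    Complex.ofReal_re, Complex.ofReal_im, Complex.I_re, Complex.I_im]
  push_cast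
  ring_nf
  rw [Complex.I_sq]
  ring

lemma single_sum_lin (L : (Fin n → ℂ) →L[ℝ] ℂ) (d : Fin n → ℂ) :
    (L d - Complex.I * L (Complex.I • d)) / 2
      = ∑ k, (L (Pi.single k 1) - Complex.I * L (Pi.single k Complex.I)) / 2 * d k := by
  have hA : ∑ k, Pi.single (M := fun _ : Fin n => ℂ) k (d k) = d := Finset.univ_sum_single d
  have hB : ∑ k, Pi.single (M := fun _ : Fin n => ℂ) k (Complex.I * d k) = Complex.I • d := by
    have h := Finset.univ_sum_single (Complex.I • d)
    simpa [Pi.smul_apply, smul_eq_mul] using h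
  symm
  calc ∑ k, (L (Pi.single k 1) - Complex.I * L (Pi.single k Complex.I)) / 2 * d k
      = ∑ k, (L (Pi.single k (d k)) - Complex.I * L (Pi.single k (Complex.I * d k))) / 2 :=
        Finset.sum_congr rfl fun k _ => (single_lin L k (d k)).symm
    _ = ((∑ k, L (Pi.single k (d k))) - Complex.I * ∑ k, L (Pi.single k (Complex.I * d k))) / 2 := by
        rw [Finset.mul_sum, ← Finset.sum_sub_distrib, Finset.sum_div]
    _ = (L d - Complex.I * L (Complex.I • d)) / 2 := by
        rw [← map_sum, ← map_sum, hA, hB]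

lemma comp_deriv (hU : IsOpen U) {γ : ℂ → Fin n → ℂ} (hγ : DifferentiableOn ℂ γ U)
    (k : Fin n) {t : ℂ} (ht : t ∈ U) :
    deriv (fun s => γ s k) t = deriv γ t k := by
  have hγt : DifferentiableAt ℂ γ t := hγ.differentiableAt (hU.mem_nhds ht)
  have h := (ContinuousLinearMap.proj (R := ℂ) (φ := fun _ : Fin n => ℂ) k).hasFDerivAt.comp_hasDerivAt t hγt.hasDerivAt
  exact h.deriv

lemma wd_comp (hU : IsOpen U) {γ : ℂ → Fin n → ℂ} (hγ : DifferentiableOn ℂ γ U)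
    {g : (Fin n → ℂ) → ℂ} (hg : ContDiff ℝ ∞ g) {t : ℂ} (ht : t ∈ U) :
    wd (fun s => g (γ s)) t = ∑ k, wdz k g (γ t) * deriv (fun s => γ s k) t := by
  have hγt : DifferentiableAt ℂ γ t := hγ.differentiableAt (hU.mem_nhds ht)
  have hγtR : DifferentiableAt ℝ γ t := hγt.restrictScalars ℝ
  have hcomp : fderiv ℝ (fun s => g (γ s)) t
      = (fderiv ℝ g (γ t)).comp (fderiv ℝ γ t) := by
    rw [show (fun s => g (γ s)) = g ∘ γ from rfl]
    exact fderiv_comp t ((hg.differentiable (by simp)) (γ t)) hγtR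
  have hres : fderiv ℝ γ t = (fderiv ℂ γ t).restrictScalars ℝ :=
    hγt.fderiv_restrictScalars ℝ
  have hc1 : fderiv ℝ γ t 1 = deriv γ t := by rw [hres]; rfl
  have hcI : fderiv ℝ γ t Complex.I = Complex.I • deriv γ t := by
    rw [hres]
    show fderiv ℂ γ t Complex.I = Complex.I • deriv γ t
    conv_lhs => rw [show (Complex.I : ℂ) = Complex.I • (1:ℂ) by simp, map_smul]
    congr 1
  have e1 : fderiv ℝ (fun s => g (γ s)) t 1 = fderiv ℝ g (γ t) (deriv γ t) := by
    rw [hcomp]; simp [hc1]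
  have e2 : fderiv ℝ (fun s => g (γ s)) t Complex.I
      = fderiv ℝ g (γ t) (Complex.I • deriv γ t) := by
    rw [hcomp]; simp [hcI]
  show (fderiv ℝ (fun s => g (γ s)) t 1
      - Complex.I * fderiv ℝ (fun s => g (γ s)) t Complex.I) / 2 = _
  rw [e1, e2, single_sum_lin (fderiv ℝ g (γ t)) (deriv γ t)]
  refine Finset.sum_congr rfl fun k _ => ?_
  rw [comp_deriv hU hγ k ht]
  rfl

lemma comp_diffOn (hU : IsOpen U) {γ : ℂ → Fin n → ℂ} (hγ : DifferentiableOn ℂ γ U)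
    (k : Fin n) : DifferentiableOn ℂ (fun s => γ s k) U :=
  fun t ht => (ContinuousLinearMap.proj (R := ℂ) (φ := fun _ : Fin n => ℂ)
    k).differentiableAt.comp_differentiableWithinAt t (hγ t ht)

lemma deriv_comp_contDiffOn (hU : IsOpen U) {γ : ℂ → Fin n → ℂ}
    (hγ : DifferentiableOn ℂ γ U) (k : Fin n) :
    ContDiffOn ℝ ∞ (deriv (fun s => γ s k)) U := by
  have h1 : AnalyticOnNhd ℂ (deriv (fun s => γ s k)) U :=
    ((comp_diffOn hU hγ k).analyticOnNhd hU).deriv_of_isOpen hU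
  exact (h1.differentiableOn.contDiffOn hU).restrict_scalars ℝ

lemma vanish (hU : IsOpen U) (h0U : (0:ℂ) ∈ U) {γ : ℂ → Fin n → ℂ}
    (hγ : DifferentiableOn ℂ γ U) (hγ0 : γ 0 = 0) :
    ∀ m : ℕ, ∀ g : (Fin n → ℂ) → ℂ, ContDiff ℝ ∞ g →
      (∀ l : List (Fin n), l.length ≤ m → (l.foldr wdz g) 0 = 0) →
      ∀ a ≤ m, wd^[a] (fun s => g (γ s)) 0 = 0 := by
  intro m
  induction m with
  | zero =>
    intro g _ hvan a ha
    interval_cases a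
    have := hvan [] (by simp)
    simpa [hγ0] using this
  | succ m ih =>
    intro g hg hvan a ha
    match a with
    | 0 =>
      have := hvan [] (by simp)
      simpa [hγ0] using this
    | Nat.succ b =>
      have hb : b ≤ m := by omega
      rw [Function.iterate_succ_apply]
      have h1 : ∀ x ∈ U, wd (fun s => g (γ s)) x
          = (fun t => ∑ k, wdz k g (γ t) * deriv (fun s => γ s k) t) x :=
        fun x hx => wd_comp hU hγ hg hx
      rw [wd_iter_congr_on hU h1 b 0 h0U]
      have hterm : ∀ k : Fin n, ContDiffOn ℝ ∞
          (fun t => wdz k g (γ t) * deriv (fun s => γ s k) t) U := by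
        intro k
        exact (((wdz_contDiff hg k).comp_contDiffOn
          ((hγ.contDiffOn hU).restrict_scalars ℝ)).mul (deriv_comp_contDiffOn hU hγ k))
      rw [wd_iter_sum hU b Finset.univ _ (fun k _ => hterm k) 0 h0U]
      refine Finset.sum_eq_zero fun k _ => ?_
      refine wd_iter_mul_vanish hU h0U b (fun t => wdz k g (γ t)) _
        ((wdz_contDiff hg k).comp_contDiffOn ((hγ.contDiffOn hU).restrict_scalars ℝ))
        (deriv_comp_contDiffOn hU hγ k) (fun i hi => ?_)
      refine ih (wdz k g) (wdz_contDiff hg k) (fun l hl => ?_) i (le_trans hi hb)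
      have := hvan (l ++ [k]) (by simpa using Nat.succ_le_succ hl)
      rwa [List.foldr_append] at this

lemma foldr_sub_const {p : (Fin n → ℂ) → ℂ} (cst : ℂ) :
    ∀ m : List (Fin n), m ≠ [] →
      m.foldr wdz (fun x => p x - cst) = m.foldr wdz p := by
  intro m
  induction m with
  | nil => intro h; exact absurd rfl h
  | cons k m' ih =>
    intro _
    rcases eq_or_ne m' [] with h' | h'
    · subst h'
      simp only [List.foldr_cons, List.foldr_nil]
      funext x
      simp only [wdz, fderiv_sub_const]
    · simp only [List.foldr_cons, ih h']

end Stmt7Aux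

open Stmt7Aux ContDiff in
/-- If all pure holomorphic derivatives of r of orders 2 through N vanish at 0 = γ(0), then for
2 ≤ a ≤ N, D^{a,0}[r∘γ](0) = Σ_j r_{z_j}(0)·(dᵃγʲ/dtᵃ)(0). -/
theorem stmt7 {n : ℕ} (N : ℕ) (r : (Fin n → ℂ) → ℝ) (hr : ContDiff ℝ (⊤ : ℕ∞) r)
    (γ : ℂ → Fin n → ℂ) (U : Set ℂ) (hU : IsOpen U) (h0U : (0:ℂ) ∈ U)
    (hγ : DifferentiableOn ℂ γ U) (hγ0 : γ 0 = 0)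
    (hpure : ∀ l : List (Fin n), 2 ≤ l.length → l.length ≤ N →
      (l.foldr wdz (fun w => ((r w : ℝ) : ℂ))) 0 = 0) :
    ∀ a : ℕ, 2 ≤ a → a ≤ N →
      Dab a 0 (fun s => ((r (γ s) : ℝ) : ℂ)) 0
        = ∑ j, wdz j (fun w => ((r w : ℝ) : ℂ)) 0 * iteratedDeriv a (fun s => γ s j) 0 := by
  intro a ha2 haN
  set rc : (Fin n → ℂ) → ℂ := fun w => ((r w : ℝ) : ℂ) with hrc
  have hrcS : ContDiff ℝ ∞ rc :=
    Complex.ofRealCLM.contDiff.comp (hr.of_le (by simp))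
  set c : Fin n → ℂ := fun j => wdz j rc 0 with hcdef
  set g : (Fin n → ℂ) → ℂ := fun z => rc z - (rc 0 + ∑ j, c j * z j) with hgdef
  -- smoothness of g
  have hlin : ContDiff ℝ ∞ (fun z : Fin n → ℂ => ∑ j, c j * z j) :=
    ContDiff.sum fun j _ => contDiff_const.mul
      ((ContinuousLinearMap.proj (R := ℝ) (φ := fun _ : Fin n => ℂ) j).contDiff)
  have hgC : ContDiff ℝ ∞ g := hrcS.sub (contDiff_const.add hlin)
  -- the continuous linear map z ↦ ∑ c j * z j
  set Lc : (Fin n → ℂ) →L[ℝ] ℂ :=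
    ∑ k, (c k) • (ContinuousLinearMap.proj (R := ℝ) (φ := fun _ : Fin n => ℂ) k) with hLc
  have hLcApp : ∀ z, Lc z = ∑ j, c j * z j := by
    intro z
    simp [hLc, ContinuousLinearMap.sum_apply, smul_eq_mul]
  have hLcSingle : ∀ (k : Fin n) (w : ℂ), Lc (Pi.single k w) = c k * w := by
    intro k w
    rw [hLcApp]
    rw [Finset.sum_eq_single k]
    · simp
    · intro b _ hb
      simp [Pi.single_apply, hb]
    · simp
  -- wdz k g = wdz k rc - c k
  have hg_eq : ∀ k : Fin n, wdz k g = fun x => wdz k rc x - c k := by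
    intro k
    funext x
    have hL : HasFDerivAt (fun z : Fin n → ℂ => rc 0 + ∑ j, c j * z j) Lc x := by
      have := Lc.hasFDerivAt (x := x)
      have h2 : HasFDerivAt (fun z : Fin n → ℂ => ∑ j, c j * z j) Lc x := by
        refine this.congr_of_eventuallyEq ?_
        filter_upwards with z using (hLcApp z).symm
      exact h2.const_add (rc 0)
    have hrd : HasFDerivAt rc (fderiv ℝ rc x) x :=
      ((hrcS.differentiable (by simp)) x).hasFDerivAt
    have hfd : fderiv ℝ g x = fderiv ℝ rc x - Lc := (hrd.sub hL).fderiv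
    simp only [wdz, hfd, ContinuousLinearMap.sub_apply, hLcSingle]
    linear_combination (c k / 2) * Complex.I_mul_I
  -- pure derivatives of g up to order N vanish at 0
  have hgvan : ∀ l : List (Fin n), l.length ≤ N → (l.foldr wdz g) 0 = 0 := by
    intro l hl
    match l, hl with
    | [], _ => simp [hgdef]
    | [j], _ =>
      simp only [List.foldr_cons, List.foldr_nil, hg_eq j, hcdef, sub_self]
    | (j :: k :: l'), hl =>
      set l₀ : List (Fin n) := j :: k :: l' with hl₀
      have hne : l₀ ≠ [] := by simp [hl₀]
      have hlen : 2 ≤ l₀.length := by simp [hl₀]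
      have hsplit : l₀.dropLast ++ [l₀.getLast hne] = l₀ := List.dropLast_append_getLast hne
      have hdne : l₀.dropLast ≠ [] := by
        have : l₀.dropLast.length = l₀.length - 1 := List.length_dropLast
        intro hcon
        rw [hcon] at this
        simp at this
        omega
      have key : l₀.foldr wdz g = l₀.foldr wdz rc := by
        conv_lhs => rw [← hsplit]
        conv_rhs => rw [← hsplit]
        rw [List.foldr_append, List.foldr_append]
        simp only [List.foldr_cons, List.foldr_nil]
        rw [hg_eq (l₀.getLast hne)]
        exact foldr_sub_const (c (l₀.getLast hne)) l₀.dropLast hdne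
      rw [key]
      exact hpure l₀ hlen hl
  -- decompose rc ∘ γ
  have hsplitfun : (fun s => rc (γ s))
      = fun s => g (γ s) + (rc 0 + ∑ j, c j * γ s j) := by
    funext s
    simp [hgdef]
  have hγR : ContDiffOn ℝ ∞ γ U := (hγ.contDiffOn hU).restrict_scalars ℝ
  have hgγ : ContDiffOn ℝ ∞ (fun s => g (γ s)) U := hgC.comp_contDiffOn hγR
  have hcomp2 : ContDiffOn ℝ ∞ (fun s => rc 0 + ∑ j, c j * γ s j) U :=
    (contDiff_const.add hlin).comp_contDiffOn hγR
  have hDab : Dab a 0 (fun s => rc (γ s)) 0 = wd^[a] (fun s => rc (γ s)) 0 := by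
    simp [Dab]
  rw [hDab, hsplitfun,
    wd_iter_add hU a hgγ hcomp2 0 h0U]
  -- first summand vanishes
  have hv : wd^[a] (fun s => g (γ s)) 0 = 0 :=
    vanish hU h0U hγ hγ0 N g hgC hgvan a haN
  rw [hv, zero_add]
  -- second summand: kill the constant
  obtain ⟨b, rfl⟩ : ∃ b, a = b + 1 := ⟨a - 1, by omega⟩
  have hconstkill : wd (fun s => rc 0 + ∑ j, c j * γ s j)
      = wd (fun s => ∑ j, c j * γ s j) := by
    funext x
    simp only [wd, fderiv_const_add]
  rw [Function.iterate_succ_apply, hconstkill, ← Function.iterate_succ_apply]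
  have hsummand : ∀ j : Fin n, ContDiffOn ℝ ∞ (fun s => c j * γ s j) U := by
    intro j
    exact contDiffOn_const.mul (((comp_diffOn hU hγ j).contDiffOn hU).restrict_scalars ℝ)
  rw [wd_iter_sum hU (b+1) Finset.univ _ (fun j _ => hsummand j) 0 h0U]
  refine Finset.sum_congr rfl fun j _ => ?_
  have hγj : DifferentiableOn ℂ (fun s => γ s j) U := comp_diffOn hU hγ j
  have hγjR : ContDiffOn ℝ ∞ (fun s => γ s j) U := (hγj.contDiffOn hU).restrict_scalars ℝ
  rw [wd_iter_const_mul hU (b+1) (c j) hγjR 0 h0U,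
    wd_iter_holo hU (b+1) _ hγj 0 h0U,
    iteratedDeriv_eq_iterate (n := b+1) (f := fun s => γ s j)]
end
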